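/- arXiv:1312.1776 — 3 statements merged into one kernel-verified Lean document; each statement's English description precedes it below -/
import Mathlib

section
/- Let h : ℤ → ℝ be finitely supported and p ∈ ℕ. The convolution operator with impulse response h annihilates all sequences α ↦ q(α) with q a polynomial of degree at most p if and only if the derivatives (h*)^{(k)}(1) = 0 for k = 0, …, p, equivalently (z⁻¹ − 1)^{p+1} divides h*(z) in the ring of Laurent polynomials. -/
/-!
All three conditions say that the functional `q ↦ ∑ⱼ h j * q(j)` vanishes on polynomials of
degree `≤ p`, a space spanned by the falling factorials `z (z - 1) ⋯ (z - k + 1)`, `k ≤ p`.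
The convolution at `α` is this functional applied to `q(α - ·)`, and substituting an affine
polynomial preserves the degree bound. Differentiating `z ^ j` `k` times at `1` gives the `k`-th
falling factorial of `j`. Finally, if `N` clears the negative powers, `(z⁻¹ - 1)^(p+1)` divides
the symbol iff `(X - 1)^(p+1)` divides the polynomial `X^N h*`, i.e. iff its first `p`
derivatives vanish at `1`; these are the functional evaluated on the falling factorials
shifted by `N`.
-/

open Polynomial
open LaurentPolynomial (T isUnit_T exists_T_pow)

namespace Polynomial

variable {R M : Type*}

theorem comp_mem_degreeLE [Semiring R] {p : ℕ} {q r : R[X]}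
    (hq : q ∈ degreeLE R p) (hr : r.natDegree ≤ 1) : q.comp r ∈ degreeLE R p := by
  rw [mem_degreeLE, ← natDegree_le_iff_degree_le] at hq ⊢
  calc (q.comp r).natDegree ≤ q.natDegree * r.natDegree := natDegree_comp_le
    _ ≤ p * 1 := Nat.mul_le_mul hq hr
    _ = p := mul_one p

theorem degreeLE_le_ker_iff [Ring R] [AddCommGroup M] [Module R M]
    (L : R[X] →ₗ[R] M) {p : ℕ} (b : ℕ → R[X]) (hdeg : ∀ k, (b k).degree = k)
    (hunit : ∀ k ≤ p, IsUnit (b k).leadingCoeff) :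
    degreeLE R p ≤ LinearMap.ker L ↔ ∀ k ≤ p, L (b k) = 0 := by
  rw [← Sequence.span_degreeLE ⟨b, hdeg⟩ hunit, Submodule.span_le]
  simp [Set.subset_def]

theorem degreeLE_le_ker_iff_descPochhammer [Ring R] [Nontrivial R] [NoZeroDivisors R]
    [AddCommGroup M] [Module R M] (L : R[X] →ₗ[R] M) {p : ℕ} :
    degreeLE R p ≤ LinearMap.ker L ↔ ∀ k ≤ p, L (descPochhammer R k) = 0 :=
  degreeLE_le_ker_iff L _
    (fun k => by
      rw [degree_eq_natDegree (monic_descPochhammer R k).ne_zero, descPochhammer_natDegree])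
    (fun k _ => by rw [(monic_descPochhammer R k).leadingCoeff]; exact isUnit_one)

theorem degreeLE_le_ker_comp_taylor_iff [CommRing R] [AddCommGroup M] [Module R M]
    (L : R[X] →ₗ[R] M) {p : ℕ} (r : R) :
    degreeLE R p ≤ LinearMap.ker (L ∘ₗ taylor r) ↔ degreeLE R p ≤ LinearMap.ker L := by
  refine ⟨fun hL q hq => ?_, fun hL q hq => hL ?_⟩
  · have hq' : taylor (-r) q ∈ degreeLE R p := by
      rwa [mem_degreeLE, degree_taylor, ← mem_degreeLE]
    simpa [taylor_taylor] using hL hq'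
  · rwa [mem_degreeLE, degree_taylor, ← mem_degreeLE]

theorem X_sub_C_pow_succ_dvd_iff [CommRing R] [IsDomain R] [CharZero R]
    {F : R[X]} {t : R} {p : ℕ} :
    (X - C t) ^ (p + 1) ∣ F ↔ ∀ d ≤ p, (derivative^[d] F).eval t = 0 := by
  rcases eq_or_ne F 0 with rfl | hF
  · simp
  rw [← le_rootMultiplicity_iff hF, Nat.succ_le_iff,
    lt_rootMultiplicity_iff_isRoot_iterate_derivative hF]
  rfl

theorem toLaurent_dvd_toLaurent_iff [CommRing R] {f g : R[X]} (hf : IsCoprime f X) :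
    toLaurent f ∣ toLaurent g ↔ f ∣ g := by
  refine ⟨fun ⟨u, hu⟩ => ?_, fun ⟨u, hu⟩ => ⟨toLaurent u, by rw [hu, map_mul]⟩⟩
  obtain ⟨n, u', hu'⟩ := exists_T_pow u
  have hgX : g * X ^ n = f * u' := toLaurent_injective <| by
    rw [map_mul, map_mul, toLaurent_X_pow, hu, hu', mul_assoc]
  exact (hf.pow_right (n := n)).dvd_of_dvd_mul_right ⟨u', hgX⟩

end Polynomial

theorem LaurentPolynomial.T_neg_one_sub_one_pow_dvd_iff {R : Type*} [CommRing R]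
    {f : LaurentPolynomial R} {m : ℕ} : (T (-1) - 1) ^ m ∣ f ↔ (T 1 - 1) ^ m ∣ f := by
  have hT : (T (-1) - 1 : LaurentPolynomial R) = (T 1 - 1) * -T (-1) := by
    rw [mul_neg, sub_mul, ← LaurentPolynomial.T_add, one_mul]; norm_num
  rw [hT, mul_pow, (((isUnit_T (R := R) (-1)).neg).pow m).mul_right_dvd]

section Convolution

variable {R : Type*} [CommRing R]

noncomputable def momentFunctional (h : ℤ → R) (s : Finset ℤ) : R[X] →ₗ[R] R :=
  ∑ j ∈ s, h j • leval (j : R)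

@[simp]
theorem momentFunctional_apply (h : ℤ → R) (s : Finset ℤ) (q : R[X]) :
    momentFunctional h s q = ∑ j ∈ s, h j * q.eval (j : R) := by
  simp [momentFunctional]

theorem finsum_conv_eval_eq_momentFunctional (h : ℤ → R) (hh : (Function.support h).Finite)
    (q : R[X]) (α : ℤ) :
    ∑ᶠ j : ℤ, h (α - j) * q.eval (j : R) =
      momentFunctional h hh.toFinset (q.comp (C (α : R) - X)) := by
  rw [← finsum_comp_equiv (Equiv.subLeft α), momentFunctional_apply,
    finsum_eq_sum_of_support_subset _ (s := hh.toFinset) ?_]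
  · refine Finset.sum_congr rfl fun j _ => ?_
    simp
  · simpa using Function.support_mul_subset_left _ _

theorem conv_annihilates_iff_degreeLE_le_ker (h : ℤ → R) (hh : (Function.support h).Finite)
    (p : ℕ) :
    (∀ q : R[X], q.degree ≤ p → ∀ α : ℤ, ∑ᶠ j : ℤ, h (α - j) * q.eval (j : R) = 0) ↔
      degreeLE R p ≤ LinearMap.ker (momentFunctional h hh.toFinset) := by
  have hreflect : ∀ α : ℤ, (C (α : R) - X).natDegree ≤ 1 := fun α =>
    (natDegree_sub_le _ _).trans (max_le (by simp) natDegree_X_le)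
  simp only [finsum_conv_eval_eq_momentFunctional h hh, ← mem_degreeLE]
  refine ⟨fun hconv q hq => ?_, fun hL q hq α => hL (comp_mem_degreeLE hq (hreflect α))⟩
  simpa [comp_assoc] using hconv _ (comp_mem_degreeLE hq (hreflect 0)) 0

theorem toLaurent_sum_C_mul_X_pow (h : ℤ → R) (s : Finset ℤ) {N : ℕ}
    (hN : ∀ j ∈ s, 0 ≤ j + N) :
    toLaurent (∑ j ∈ s, C (h j) * X ^ (j + N).toNat) =
      (∑ j ∈ s, LaurentPolynomial.C (h j) * T j) * T N := by
  rw [map_sum, Finset.sum_mul]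
  refine Finset.sum_congr rfl fun j hj => ?_
  rw [C_mul_X_pow_eq_monomial, toLaurent_C_mul_T, mul_assoc, ← LaurentPolynomial.T_add,
    Int.toNat_of_nonneg (hN j hj)]

theorem iterate_derivative_sum_C_mul_X_pow_eval_one (h : ℤ → R) (s : Finset ℤ) {N : ℕ}
    (hN : ∀ j ∈ s, 0 ≤ j + N) (d : ℕ) :
    (derivative^[d] (∑ j ∈ s, C (h j) * X ^ (j + N).toNat)).eval 1 =
      momentFunctional h s (taylor (N : R) (descPochhammer R d)) := by
  rw [iterate_derivative_sum, eval_finsetSum, momentFunctional_apply]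
  refine Finset.sum_congr rfl fun j hj => ?_
  rw [iterate_derivative_C_mul, iterate_derivative_X_pow_eq_smul, taylor_eval,
    ← descPochhammer_eval_eq_descFactorial]
  have hjN : (((j + N).toNat : ℕ) : R) = (j : R) + N := by
    rw [← Int.cast_natCast, Int.toNat_of_nonneg (hN j hj)]; push_cast; rfl
  rw [hjN, eval_mul, eval_C, eval_smul, eval_pow, eval_X, one_pow, smul_eq_mul, mul_one]

theorem T_neg_one_sub_one_pow_succ_dvd_iff_degreeLE_le_ker [IsDomain R] [CharZero R]
    (h : ℤ → R) (s : Finset ℤ) (p : ℕ) :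
    (T (-1) - 1) ^ (p + 1) ∣ ∑ j ∈ s, LaurentPolynomial.C (h j) * T j ↔
      degreeLE R p ≤ LinearMap.ker (momentFunctional h s) := by
  obtain ⟨N, hN⟩ : ∃ N : ℕ, ∀ j ∈ s, 0 ≤ j + N :=
    ⟨s.sup Int.natAbs, fun j hj => by have := Finset.le_sup (f := Int.natAbs) hj; omega⟩
  have hX : (T 1 - 1 : LaurentPolynomial R) = toLaurent (X - C 1) := by simp
  have hcop : IsCoprime ((X - C 1 : R[X]) ^ (p + 1)) X :=
    IsCoprime.pow_left ⟨-1, 1, by rw [map_one]; ring⟩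
  rw [LaurentPolynomial.T_neg_one_sub_one_pow_dvd_iff, ← (isUnit_T (N : ℤ)).dvd_mul_right,
    ← toLaurent_sum_C_mul_X_pow h s hN, hX, ← map_pow, toLaurent_dvd_toLaurent_iff hcop,
    X_sub_C_pow_succ_dvd_iff, ← degreeLE_le_ker_comp_taylor_iff _ (N : R),
    degreeLE_le_ker_iff_descPochhammer]
  simp only [iterate_derivative_sum_C_mul_X_pow_eval_one h s hN, LinearMap.comp_apply]

end Convolution

section Symbol

variable {𝕜 : Type*} [NontriviallyNormedField 𝕜] [CompleteSpace 𝕜]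

theorem iteratedDeriv_sum_mul_zpow_one (h : ℤ → 𝕜) (s : Finset ℤ) (k : ℕ) :
    iteratedDeriv k (fun z : 𝕜 => ∑ j ∈ s, h j * z ^ j) 1 =
      momentFunctional h s (descPochhammer 𝕜 k) := by
  have hzpow (j : ℤ) : ContDiffAt 𝕜 k (fun z : 𝕜 => z ^ j) 1 :=
    (analyticAt_id.fun_zpow one_ne_zero).contDiffAt
  rw [iteratedDeriv_fun_sum (fun j _ => contDiffAt_const.mul (hzpow j)), momentFunctional_apply]
  refine Finset.sum_congr rfl fun j _ => ?_
  rw [iteratedDeriv_const_mul _ (hzpow j), iteratedDeriv_eq_iterate, iter_deriv_zpow,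
    descPochhammer_eval_eq_prod_range, one_zpow, mul_one]

theorem iteratedDeriv_finsum_mul_zpow_one_eq_zero_iff (h : ℤ → 𝕜)
    (hh : (Function.support h).Finite) (p : ℕ) :
    (∀ k ≤ p, iteratedDeriv k (fun z : 𝕜 => ∑ᶠ j : ℤ, h j * z ^ j) 1 = 0) ↔
      degreeLE 𝕜 p ≤ LinearMap.ker (momentFunctional h hh.toFinset) := by
  have hsum : (fun z : 𝕜 => ∑ᶠ j : ℤ, h j * z ^ j) = fun z => ∑ j ∈ hh.toFinset, h j * z ^ j :=
    funext fun z => finsum_eq_sum_of_support_subset _ <| by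
      simp
  simp only [hsum, iteratedDeriv_sum_mul_zpow_one, degreeLE_le_ker_iff_descPochhammer]

end Symbol

open LaurentPolynomial in
/-- A finitely supported convolution operator annihilates all polynomial sequences of
degree at most `p` iff the derivatives of its symbol up to order `p` vanish at `1`,
equivalently iff `(z⁻¹ - 1)^(p+1)` divides the symbol in the ring of Laurent
polynomials. -/
theorem convolution_annihilates_polynomials_iff (h : ℤ → ℝ)
    (hh : (Function.support h).Finite) (p : ℕ) :
    ((∀ q : Polynomial ℝ, q.degree ≤ p →
        ∀ α : ℤ, ∑ᶠ j : ℤ, h (α - j) * q.eval (j : ℝ) = 0) ↔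
      (∀ k ≤ p, iteratedDeriv k (fun z : ℝ => ∑ᶠ j : ℤ, h j * z ^ j) 1 = 0)) ∧
    ((∀ q : Polynomial ℝ, q.degree ≤ p →
        ∀ α : ℤ, ∑ᶠ j : ℤ, h (α - j) * q.eval (j : ℝ) = 0) ↔
      (T (-1) - 1) ^ (p + 1) ∣
        ∑ j ∈ hh.toFinset, LaurentPolynomial.C (h j) * T j) := by
  rw [conv_annihilates_iff_degreeLE_le_ker h hh p,
    iteratedDeriv_finsum_mul_zpow_one_eq_zero_iff h hh p,
    T_neg_one_sub_one_pow_succ_dvd_iff_degreeLE_le_ker]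
  exact ⟨Iff.rfl, Iff.rfl⟩
end

section
/- Let a, b : ℤ → ℝ be finitely supported masks and h, h' : ℤ → ℝ finitely supported impulse responses of convolution operators H, H'. Then the operator identity H' S_a = S_b H on finitely supported sequences holds if and only if the symbols satisfy (h')*(z) a*(z) = b*(z) h*(z²) for all z ∈ ℂ \ {0}. -/
open Function Pointwise

noncomputable section CommAux

variable {K : Type*} [Field K]

/-- strided convolution: `sconv m f g γ = ∑ β, f (γ - m β) g β`. -/
noncomputable def sconv (m : ℤ) (f g : ℤ → K) : ℤ → K :=
  fun γ => ∑ᶠ β : ℤ, f (γ - m * β) * g β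

lemma preimage_affine_finite {f : ℤ → K} (hf : (support f).Finite) {m : ℤ} (hm : m ≠ 0) (γ : ℤ) :
    ((fun β : ℤ => γ - m * β) ⁻¹' (support f)).Finite := by
  refine Set.Finite.preimage ?_ hf
  intro x _ y _ hxy
  simp only at hxy
  have : m * x = m * y := by linarith
  exact mul_left_cancel₀ hm this

lemma sconv_supp_subset {m : ℤ} (f g : ℤ → K) :
    support (sconv m f g) ⊆ support f + (fun β => m * β) '' support g := by
  intro γ hγ
  simp only [mem_support, sconv] at hγ
  have : ∃ β, f (γ - m * β) * g β ≠ 0 := by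
    by_contra hc
    push_neg at hc
    exact hγ (finsum_eq_zero_of_forall_eq_zero hc)
  obtain ⟨β, hβ⟩ := this
  have hfv : f (γ - m * β) ≠ 0 := fun h0 => hβ (by simp [h0])
  have hgv : g β ≠ 0 := fun h0 => hβ (by simp [h0])
  exact ⟨γ - m * β, hfv, m * β, ⟨β, hgv, rfl⟩, by ring⟩

lemma sconv_supp {m : ℤ} {f g : ℤ → K} (hf : (support f).Finite) (hg : (support g).Finite) :
    (support (sconv m f g)).Finite :=
  (hf.add (hg.image (fun β => m * β))).subset (sconv_supp_subset f g)

/-- Composition of two strided subdivision-type operators. -/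
lemma sconv_sconv {m n : ℤ} (hm : m ≠ 0) {f g c : ℤ → K}
    (hf : (support f).Finite) (hc : (support c).Finite) (α : ℤ) :
    sconv m f (sconv n g c) α = ∑ᶠ γ : ℤ, sconv m f g (α - m * n * γ) * c γ := by
  classical
  set C := hc.toFinset with hC
  have hinner : ∀ β : ℤ, sconv n g c β = ∑ γ ∈ C, g (β - n * γ) * c γ := by
    intro β
    refine finsum_eq_sum_of_support_subset _ ?_
    intro γ hγ
    simp only [mem_support] at hγ
    have : c γ ≠ 0 := fun h0 => hγ (by simp [h0])
    simpa [hC] using this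
  have hBset := preimage_affine_finite hf hm α
  set B := hBset.toFinset with hB
  have houter : sconv m f (sconv n g c) α = ∑ β ∈ B, f (α - m * β) * sconv n g c β := by
    refine finsum_eq_sum_of_support_subset _ ?_
    intro β hβ
    simp only [mem_support] at hβ
    have : f (α - m * β) ≠ 0 := fun h0 => hβ (by simp [h0])
    simpa [hB] using this
  rw [houter]
  simp_rw [hinner, Finset.mul_sum]
  rw [Finset.sum_comm]
  have hrhs : (∑ᶠ γ : ℤ, sconv m f g (α - m * n * γ) * c γ) =
      ∑ γ ∈ C, sconv m f g (α - m * n * γ) * c γ := by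
    refine finsum_eq_sum_of_support_subset _ ?_
    intro γ hγ
    simp only [mem_support] at hγ
    have : c γ ≠ 0 := fun h0 => hγ (by simp [h0])
    simpa [hC] using this
  rw [hrhs]
  refine Finset.sum_congr rfl ?_
  intro γ _
  have key : (∑ β ∈ B, f (α - m * β) * g (β - n * γ)) = sconv m f g (α - m * n * γ) := by
    have h1 : (∑ β ∈ B, f (α - m * β) * g (β - n * γ)) =
        ∑ᶠ β : ℤ, f (α - m * β) * g (β - n * γ) := by
      refine (finsum_eq_sum_of_support_subset _ ?_).symm
      intro β hβ
      simp only [mem_support] at hβ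
      have : f (α - m * β) ≠ 0 := fun h0 => hβ (by simp [h0])
      simpa [hB] using this
    rw [h1]
    have h2 := finsum_comp (g := fun β : ℤ => f (α - m * n * γ - m * β) * g β)
      (fun β : ℤ => β - n * γ) (Equiv.subRight (n * γ)).bijective
    rw [show sconv m f g (α - m * n * γ) = ∑ᶠ β : ℤ, f (α - m * n * γ - m * β) * g β from rfl,
      ← h2]
    refine finsum_congr fun β => ?_
    congr 2
    ring
  calc (∑ β ∈ B, f (α - m * β) * (g (β - n * γ) * c γ))
      = (∑ β ∈ B, f (α - m * β) * g (β - n * γ)) * c γ := by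
        rw [Finset.sum_mul]; refine Finset.sum_congr rfl fun β _ => by ring
    _ = sconv m f g (α - m * n * γ) * c γ := by rw [key]

/-- Symbol of a strided convolution. -/
lemma symbol_mul (m : ℤ) {f g : ℤ → K} (hf : (support f).Finite) (hg : (support g).Finite)
    {z : K} (hz : z ≠ 0) :
    (∑ᶠ α : ℤ, f α * z ^ α) * (∑ᶠ β : ℤ, g β * z ^ (m * β)) =
      ∑ᶠ γ : ℤ, sconv m f g γ * z ^ γ := by
  classical
  set F := hf.toFinset with hF
  set G := hg.toFinset with hG
  set D := (hf.add (hg.image (fun β => m * β))).toFinset with hD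
  have e1 : (∑ᶠ α : ℤ, f α * z ^ α) = ∑ α ∈ F, f α * z ^ α := by
    refine finsum_eq_sum_of_support_subset _ fun α hα => ?_
    simp only [mem_support] at hα
    have : f α ≠ 0 := fun h0 => hα (by simp [h0])
    simpa [hF] using this
  have e2 : (∑ᶠ β : ℤ, g β * z ^ (m * β)) = ∑ β ∈ G, g β * z ^ (m * β) := by
    refine finsum_eq_sum_of_support_subset _ fun β hβ => ?_
    simp only [mem_support] at hβ
    have : g β ≠ 0 := fun h0 => hβ (by simp [h0])
    simpa [hG] using this
  have e3 : (∑ᶠ γ : ℤ, sconv m f g γ * z ^ γ) = ∑ γ ∈ D, sconv m f g γ * z ^ γ := by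
    refine finsum_eq_sum_of_support_subset _ fun γ hγ => ?_
    simp only [mem_support] at hγ
    have : sconv m f g γ ≠ 0 := fun h0 => hγ (by simp [h0])
    have := sconv_supp_subset f g this
    simpa [hD] using this
  rw [e1, e2, e3, Finset.sum_mul_sum]
  have e4 : ∀ γ : ℤ, sconv m f g γ = ∑ β ∈ G, f (γ - m * β) * g β := by
    intro γ
    refine finsum_eq_sum_of_support_subset _ fun β hβ => ?_
    simp only [mem_support] at hβ
    have : g β ≠ 0 := fun h0 => hβ (by simp [h0])
    simpa [hG] using this
  simp_rw [e4, Finset.sum_mul]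
  conv_lhs => rw [Finset.sum_comm]
  conv_rhs => rw [Finset.sum_comm]
  refine Finset.sum_congr rfl fun β hβ => ?_
  have hgβ : g β ≠ 0 := by rwa [hG, Set.Finite.mem_toFinset, mem_support] at hβ
  have h1 : (∑ γ ∈ D, f (γ - m * β) * g β * z ^ γ) =
      ∑ᶠ γ : ℤ, f (γ - m * β) * g β * z ^ γ := by
    refine (finsum_eq_sum_of_support_subset _ fun γ hγ => ?_).symm
    simp only [mem_support] at hγ
    have hfγ : f (γ - m * β) ≠ 0 := fun h0 => hγ (by simp [h0])
    rw [hD, Set.Finite.coe_toFinset]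
    exact ⟨γ - m * β, hfγ, m * β, ⟨β, hgβ, rfl⟩, by ring⟩
  rw [h1]
  have h2 := finsum_comp (g := fun γ : ℤ => f (γ - m * β) * g β * z ^ γ)
    (fun α : ℤ => α + m * β) (Equiv.addRight (m * β)).bijective
  simp only [add_sub_cancel_right] at h2
  rw [← h2]
  have h3 : (∑ᶠ α : ℤ, f α * g β * z ^ (α + m * β)) =
      ∑ α ∈ F, f α * g β * z ^ (α + m * β) := by
    refine finsum_eq_sum_of_support_subset _ fun α hα => ?_
    simp only [mem_support] at hα
    have : f α ≠ 0 := fun h0 => hα (by simp [h0])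
    simpa [hF] using this
  rw [h3]
  refine Finset.sum_congr rfl fun α _ => ?_
  rw [zpow_add₀ hz]
  ring

/-- A Laurent polynomial vanishing on `ℂ \ {0}` has zero coefficients. -/
lemma laurent_eq_zero {f : ℤ → ℂ} (hf : (support f).Finite)
    (h0 : ∀ z : ℂ, z ≠ 0 → (∑ᶠ α : ℤ, f α * z ^ α) = 0) : ∀ α, f α = 0 := by
  classical
  set S := hf.toFinset with hS
  set N : ℕ := S.sup fun α => (-α).toNat with hNdef
  have hN : ∀ α ∈ S, 0 ≤ α + N := by
    intro α hα
    have := Finset.le_sup (f := fun α : ℤ => (-α).toNat) hα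
    omega
  set p : Polynomial ℂ := ∑ α ∈ S, Polynomial.C (f α) * Polynomial.X ^ (α + N).toNat with hp
  have hpz : ∀ z : ℂ, z ≠ 0 → p.eval z = 0 := by
    intro z hz
    have hev : p.eval z = ∑ α ∈ S, f α * z ^ ((α + N).toNat : ℕ) := by
      rw [hp, Polynomial.eval_finset_sum]
      refine Finset.sum_congr rfl fun α _ => by simp
    have hsum : (∑ᶠ α : ℤ, f α * z ^ α) = ∑ α ∈ S, f α * z ^ α := by
      refine finsum_eq_sum_of_support_subset _ fun α hα => ?_
      simp only [mem_support] at hα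
      have : f α ≠ 0 := fun h => hα (by simp [h])
      simpa [hS] using this
    have : p.eval z = (∑ α ∈ S, f α * z ^ α) * z ^ (N : ℤ) := by
      rw [hev, Finset.sum_mul]
      refine Finset.sum_congr rfl fun α hα => ?_
      rw [← zpow_natCast z ((α + N).toNat), Int.toNat_of_nonneg (hN α hα), zpow_add₀ hz]
      ring
    rw [this, ← hsum, h0 z hz, zero_mul]
  have hp0 : p = 0 := by
    refine Polynomial.eq_zero_of_infinite_isRoot p ?_
    refine Set.Infinite.mono ?_ ((Set.finite_singleton (0 : ℂ)).infinite_compl)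
    intro z hz
    exact hpz z hz
  intro α₀
  by_cases hα₀ : α₀ ∈ S
  · have hc : p.coeff ((α₀ + N).toNat) = f α₀ := by
      rw [hp, Polynomial.finset_sum_coeff]
      have : ∀ α ∈ S, (Polynomial.C (f α) * Polynomial.X ^ (α + N).toNat).coeff
          ((α₀ + N).toNat) = if α = α₀ then f α₀ else 0 := by
        intro α hα
        rw [Polynomial.coeff_C_mul, Polynomial.coeff_X_pow]
        by_cases h : α = α₀
        · simp [h]
        · have : (α₀ + N).toNat ≠ (α + N).toNat := by
            have h1 := hN α hα
            have h2 := hN α₀ hα₀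
            omega
          simp [this, h]
      rw [Finset.sum_congr rfl this, Finset.sum_ite_eq' S α₀ (fun _ => f α₀)]
      simp [hα₀]
    rw [hp0] at hc
    simpa using hc.symm
  · have : α₀ ∉ support f := fun h => hα₀ (by simpa [hS] using h)
    simpa [mem_support, not_not] using this

/-- Casting a real strided convolution to `ℂ`. -/
lemma sconv_cast (m : ℤ) (f : ℤ → ℝ) {g : ℤ → ℝ} (hg : (support g).Finite) (α : ℤ) :
    ((sconv m f g α : ℝ) : ℂ) =
      sconv m (fun x => (f x : ℂ)) (fun x => (g x : ℂ)) α := by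
  have hfin : (support fun β : ℤ => f (α - m * β) * g β).Finite :=
    hg.subset fun β hβ => by
      simp only [mem_support] at hβ ⊢; exact fun h0 => hβ (by simp [h0])
  have hmap := AddMonoidHom.map_finsum Complex.ofRealHom.toAddMonoidHom hfin
  simp only [RingHom.toAddMonoidHom_eq_coe, AddMonoidHom.coe_coe, Complex.ofRealHom_eq_coe] at hmap
  rw [show sconv m f g α = ∑ᶠ β : ℤ, f (α - m * β) * g β from rfl, hmap]
  refine finsum_congr fun β => ?_
  push_cast
  rfl

lemma cast_supp {f : ℤ → ℝ} (hf : (support f).Finite) :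
    (support fun x : ℤ => ((f x : ℝ) : ℂ)).Finite :=
  hf.subset fun x hx => by simpa [mem_support] using hx

end CommAux

/-- The operator identity `H' S_a = S_b H` on finitely supported sequences holds iff
the symbols satisfy `(h')*(z) a*(z) = b*(z) h*(z²)` for all `z ∈ ℂ \ {0}`. -/
theorem commutation_iff_symbol_factorization
    (a b h h' : ℤ → ℝ)
    (ha : (Function.support a).Finite) (hb : (Function.support b).Finite)
    (hh : (Function.support h).Finite) (hh' : (Function.support h').Finite) :
    (∀ c : ℤ → ℝ, (Function.support c).Finite → ∀ α : ℤ,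
        ∑ᶠ β : ℤ, h' (α - β) * (∑ᶠ γ : ℤ, a (β - 2 * γ) * c γ) =
          ∑ᶠ β : ℤ, b (α - 2 * β) * (∑ᶠ γ : ℤ, h (β - γ) * c γ)) ↔
    (∀ z : ℂ, z ≠ 0 →
        (∑ᶠ α : ℤ, (h' α : ℂ) * z ^ α) * (∑ᶠ α : ℤ, (a α : ℂ) * z ^ α) =
          (∑ᶠ α : ℤ, (b α : ℂ) * z ^ α) * (∑ᶠ α : ℤ, (h α : ℂ) * (z ^ 2) ^ α)) := by
  classical
  -- Step 1: the operator identity is equivalent to the coefficient identity over ℝ.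
  have step1 : (∀ c : ℤ → ℝ, (Function.support c).Finite → ∀ α : ℤ,
      ∑ᶠ β : ℤ, h' (α - β) * (∑ᶠ γ : ℤ, a (β - 2 * γ) * c γ) =
        ∑ᶠ β : ℤ, b (α - 2 * β) * (∑ᶠ γ : ℤ, h (β - γ) * c γ)) ↔
      (∀ α : ℤ, sconv 1 h' a α = sconv 2 b h α) := by
    constructor
    · intro hop α
      set δ : ℤ → ℝ := fun γ => if γ = 0 then (1 : ℝ) else 0 with hδdef
      have hδ : (Function.support δ).Finite := by
        refine (Set.finite_singleton (0 : ℤ)).subset fun γ hγ => ?_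
        simp only [mem_support] at hγ
        by_contra hne
        exact hγ (if_neg (by simpa using hne))
      have key := hop δ hδ α
      have e1 : ∀ β : ℤ, (∑ᶠ γ : ℤ, a (β - 2 * γ) * δ γ) = a β := by
        intro β
        rw [finsum_eq_single _ 0 (fun x hx => by simp [hδdef, hx])]
        simp [hδdef]
      have e2 : ∀ β : ℤ, (∑ᶠ γ : ℤ, h (β - γ) * δ γ) = h β := by
        intro β
        rw [finsum_eq_single _ 0 (fun x hx => by simp [hδdef, hx])]
        simp [hδdef]
      simp only [e1, e2] at key
      have l1 : sconv 1 h' a α = ∑ᶠ β : ℤ, h' (α - β) * a β :=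
        finsum_congr fun β => by norm_num [sconv]
      have l2 : sconv 2 b h α = ∑ᶠ β : ℤ, b (α - 2 * β) * h β := rfl
      rw [l1, l2]
      exact key
    · intro P c hc α
      have l1 : (∑ᶠ β : ℤ, h' (α - β) * (∑ᶠ γ : ℤ, a (β - 2 * γ) * c γ)) =
          sconv 1 h' (sconv 2 a c) α :=
        finsum_congr fun β => by norm_num [sconv]
      have l2 : (∑ᶠ β : ℤ, b (α - 2 * β) * (∑ᶠ γ : ℤ, h (β - γ) * c γ)) =
          sconv 2 b (sconv 1 h c) α :=
        finsum_congr fun β => by norm_num [sconv]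
      rw [l1, l2, sconv_sconv (m := 1) (n := 2) one_ne_zero hh' hc α,
        sconv_sconv (m := 2) (n := 1) two_ne_zero hb hc α]
      refine finsum_congr fun γ => ?_
      rw [show α - 1 * 2 * γ = α - 2 * γ by ring, show α - 2 * 1 * γ = α - 2 * γ by ring,
        P (α - 2 * γ)]
  rw [step1]
  -- cast to ℂ
  have step2 : (∀ α : ℤ, sconv 1 h' a α = sconv 2 b h α) ↔
      (∀ α : ℤ, sconv 1 (fun x : ℤ => ((h' x : ℂ))) (fun x : ℤ => ((a x : ℂ))) α =
        sconv 2 (fun x : ℤ => ((b x : ℂ))) (fun x : ℤ => ((h x : ℂ))) α) := by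
    constructor
    · intro P α
      rw [← sconv_cast 1 h' ha α, ← sconv_cast 2 b hh α, P α]
    · intro P α
      have := P α
      rw [← sconv_cast 1 h' ha α, ← sconv_cast 2 b hh α] at this
      exact_mod_cast this
  rw [step2]
  -- symbols
  have sym1 : ∀ z : ℂ, z ≠ 0 →
      (∑ᶠ α : ℤ, (h' α : ℂ) * z ^ α) * (∑ᶠ α : ℤ, (a α : ℂ) * z ^ α) =
        ∑ᶠ γ : ℤ, sconv 1 (fun x : ℤ => ((h' x : ℂ))) (fun x : ℤ => ((a x : ℂ))) γ * z ^ γ := by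
    intro z hz
    rw [← symbol_mul 1 (cast_supp hh') (cast_supp ha) hz]
    congr 1
    exact finsum_congr fun β => by norm_num
  have sym2 : ∀ z : ℂ, z ≠ 0 →
      (∑ᶠ α : ℤ, (b α : ℂ) * z ^ α) * (∑ᶠ α : ℤ, (h α : ℂ) * (z ^ 2) ^ α) =
        ∑ᶠ γ : ℤ, sconv 2 (fun x : ℤ => ((b x : ℂ))) (fun x : ℤ => ((h x : ℂ))) γ * z ^ γ := by
    intro z hz
    rw [← symbol_mul 2 (cast_supp hb) (cast_supp hh) hz]
    congr 1
    refine finsum_congr fun β => ?_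
    rw [← zpow_natCast z 2, ← zpow_mul]
    norm_num
  constructor
  · intro P z hz
    rw [sym1 z hz, sym2 z hz]
    exact finsum_congr fun γ => by rw [P γ]
  · intro hsym
    set F1 : ℤ → ℂ := sconv 1 (fun x : ℤ => ((h' x : ℂ))) (fun x : ℤ => ((a x : ℂ))) with hF1
    set F2 : ℤ → ℂ := sconv 2 (fun x : ℤ => ((b x : ℂ))) (fun x : ℤ => ((h x : ℂ))) with hF2
    have hs1 : (Function.support F1).Finite := sconv_supp (cast_supp hh') (cast_supp ha)
    have hs2 : (Function.support F2).Finite := sconv_supp (cast_supp hb) (cast_supp hh)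
    have hd : (Function.support fun γ => F1 γ - F2 γ).Finite := by
      refine (hs1.union hs2).subset fun γ hγ => ?_
      simp only [mem_support] at hγ
      by_contra hcon
      simp only [Set.mem_union, mem_support, not_or, not_not] at hcon
      exact hγ (by rw [hcon.1, hcon.2, sub_self])
    have hzero : ∀ z : ℂ, z ≠ 0 → (∑ᶠ γ : ℤ, (F1 γ - F2 γ) * z ^ γ) = 0 := by
      intro z hz
      have hsplit : (∑ᶠ γ : ℤ, (F1 γ - F2 γ) * z ^ γ) =
          (∑ᶠ γ : ℤ, F1 γ * z ^ γ) - ∑ᶠ γ : ℤ, F2 γ * z ^ γ := by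
        rw [← finsum_sub_distrib
          (hs1.subset fun γ hγ => by
            simp only [mem_support] at hγ ⊢; exact fun h0 => hγ (by simp [h0]))
          (hs2.subset fun γ hγ => by
            simp only [mem_support] at hγ ⊢; exact fun h0 => hγ (by simp [h0]))]
        exact finsum_congr fun γ => by ring
      rw [hsplit, ← sym1 z hz, ← sym2 z hz, hsym z hz, sub_self]
    have := laurent_eq_zero hd hzero
    intro α
    have h0 := this α
    have : F1 α = F2 α := by linear_combination h0
    exact this
end

section
/- For λ ≠ 0 and even d, the numbers h_{0,d−1} = (e^{−λ} − e^{λ} + 2 Σ_{2j+1≤d−2} λ^{2j+1}/(2j+1)!)·λ^{1−d}/2 and h_{0,d} = −(e^{−λ} + e^{λ} − 2 Σ_{2j≤d−2} λ^{2j}/(2j)!)·λ^{−d}/2 satisfy e^{±λ} − Σ_{k=0}^{d−2} (±λ)^k/k! + (±λ)^{d−1} h_{0,d−1} + (±λ)^d h_{0,d} = 0 for both sign choices. -/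
/-!
Write `d = 2n + 2` and split the Taylor polynomial `∑_{k ≤ d-2} x^k/k!` of `exp` into its even part
`E` and odd part `O`, so that it equals `E ± O` at `x = ±λ`. The coefficients are built so that
`λ^{d-1} h_{0,d-1} = O - sinh λ` and `λ^d h_{0,d} = E - cosh λ`; since `d - 1` is odd and `d` even,
both identities reduce to `e^{±λ} = cosh λ ± sinh λ`.
-/

open Finset Nat

theorem Finset.sum_range_two_mul_add_one {M : Type*} [AddCommMonoid M] (f : ℕ → M) (n : ℕ) :
    ∑ k ∈ range (2 * n + 1), f k = ∑ j ∈ range (n + 1), f (2 * j) + ∑ j ∈ range n, f (2 * j + 1) := by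
  induction n with
  | zero => simp
  | succ n ih =>
    rw [show 2 * (n + 1) + 1 = 2 * n + 1 + 1 + 1 by ring, sum_range_succ, sum_range_succ, ih]
    simp only [sum_range_succ _ (n + 1), sum_range_succ (fun j => f (2 * j + 1)), mul_add, mul_one]
    abel

section ExpTaylor

variable {K : Type*} [Field K] (x : K) (n : ℕ)

theorem sum_range_two_mul_add_one_pow_div_factorial :
    ∑ k ∈ range (2 * n + 1), x ^ k / k ! =
      ∑ j ∈ range (n + 1), x ^ (2 * j) / (2 * j)! +
        ∑ j ∈ range n, x ^ (2 * j + 1) / (2 * j + 1)! :=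
  sum_range_two_mul_add_one _ n

theorem sum_range_two_mul_add_one_neg_pow_div_factorial :
    ∑ k ∈ range (2 * n + 1), (-x) ^ k / k ! =
      ∑ j ∈ range (n + 1), x ^ (2 * j) / (2 * j)! -
        ∑ j ∈ range n, x ^ (2 * j + 1) / (2 * j + 1)! := by
  simp only [sum_range_two_mul_add_one, (even_two_mul _).neg_pow, (odd_two_mul_add_one _).neg_pow,
    neg_div, sum_neg_distrib, sub_eq_add_neg]

end ExpTaylor

theorem zpow_one_sub_natCast_eq_inv_pow {G : Type*} [GroupWithZero G] (a : G) (n : ℕ) :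
    a ^ ((1 : ℤ) - (n + 1 : ℕ)) = (a ^ n)⁻¹ := by
  rw [← zpow_natCast, ← zpow_neg]
  congr 1
  push_cast
  ring

/-- For even `d ≥ 2` and `λ ≠ 0`, the coefficients `h_{0,d-1}` and `h_{0,d}` of the
cancellation operator satisfy the first-row annihilation conditions
`e^{±λ} − Σ_{k=0}^{d−2} (±λ)^k/k! + (±λ)^{d−1} h_{0,d−1} + (±λ)^d h_{0,d} = 0`. -/
theorem first_row_annihilation (d : ℕ) (hd : 2 ≤ d) (hdeven : Even d)
    (lam : ℝ) (hlam : lam ≠ 0) :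
    let h1 : ℝ := lam ^ ((1 : ℤ) - d) / 2 *
      (Real.exp (-lam) - Real.exp lam +
        2 * ∑ j ∈ (Finset.range d).filter (fun j => 2 * j + 1 ≤ d - 2),
          lam ^ (2 * j + 1) / (Nat.factorial (2 * j + 1)))
    let h2 : ℝ := -(lam ^ (-(d : ℤ)) / 2) *
      (Real.exp (-lam) + Real.exp lam -
        2 * ∑ j ∈ (Finset.range d).filter (fun j => 2 * j ≤ d - 2),
          lam ^ (2 * j) / (Nat.factorial (2 * j)))
    (Real.exp lam - ∑ k ∈ Finset.range (d - 1), lam ^ k / (Nat.factorial k) +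
        lam ^ (d - 1) * h1 + lam ^ d * h2 = 0) ∧
    (Real.exp (-lam) - ∑ k ∈ Finset.range (d - 1), (-lam) ^ k / (Nat.factorial k) +
        (-lam) ^ (d - 1) * h1 + (-lam) ^ d * h2 = 0) := by
  intro h1 h2
  obtain ⟨n, rfl⟩ : ∃ n, d = 2 * n + 1 + 1 := by
    obtain ⟨m, rfl⟩ := hdeven
    exact ⟨m - 1, by omega⟩
  have hfilter_odd : {j ∈ range (2 * n + 1 + 1) | 2 * j + 1 ≤ 2 * n + 1 + 1 - 2} = range n := by
    ext j; simp only [mem_filter, mem_range]; omega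
  have hfilter_even : {j ∈ range (2 * n + 1 + 1) | 2 * j ≤ 2 * n + 1 + 1 - 2} = range (n + 1) := by
    ext j; simp only [mem_filter, mem_range]; omega
  set E := ∑ j ∈ range (n + 1), lam ^ (2 * j) / (2 * j)!
  set O := ∑ j ∈ range n, lam ^ (2 * j + 1) / (2 * j + 1)!
  have hpow_mul_h1 : lam ^ (2 * n + 1) * h1 = O - (Real.exp lam - Real.exp (-lam)) / 2 := by
    simp only [h1, hfilter_odd, zpow_one_sub_natCast_eq_inv_pow]
    field_simp
    ring
  have hpow_mul_h2 : lam ^ (2 * n + 1 + 1) * h2 = E - (Real.exp lam + Real.exp (-lam)) / 2 := by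
    simp only [h2, hfilter_even, zpow_neg, zpow_natCast]
    field_simp
    ring
  clear_value h1 h2
  have hpow_odd : (-lam) ^ (2 * n + 1) = -lam ^ (2 * n + 1) := (odd_two_mul_add_one n).neg_pow lam
  have hpow_even : (-lam) ^ (2 * n + 1 + 1) = lam ^ (2 * n + 1 + 1) :=
    Even.neg_pow ⟨n + 1, by ring⟩ lam
  rw [Nat.add_sub_cancel, sum_range_two_mul_add_one_neg_pow_div_factorial,
    sum_range_two_mul_add_one_pow_div_factorial, hpow_odd, hpow_even]
  exact ⟨by linear_combination hpow_mul_h1 + hpow_mul_h2,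
    by linear_combination -hpow_mul_h1 + hpow_mul_h2⟩
end
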